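/- arXiv:1007.0522 — 8 statements merged into one kernel-verified Lean document; each statement's English description precedes it below -/
import Mathlib

section
/- Let T ≥ B ≥ 1 and α ≥ 2 be integers and let T₂ be an integer with T + B ≤ T₂ < αT + B. Then every streaming code over a finite field F_q with source alphabet F_q^k (k ≥ 1) and channel alphabet F_q^n that corrects erasure bursts of length B with delay T and also corrects erasure bursts of length αB with delay T₂ satisfies k/n ≤ 1 − αB/((α−1)B + T₂); in particular its rate satisfies k/n < T/(T+B). -/
/-- The channel input stream produced by the streaming code `f` (a sequence of causal
encoding functions `f t : S^(t+1) → X`) from the source stream `s`. -/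
def chanStream {S X : Type*} (f : ∀ t : ℕ, (Fin (t + 1) → S) → X) (s : ℕ → S) (t : ℕ) : X :=
  f t fun i => s i.val

/-- Output at time `t` of the burst-erasure channel with burst length `B` and burst starting
position `j`: `none` (an erasure) for `j ≤ t ≤ j + B - 1`, and the channel input otherwise. -/
def burstOut {S X : Type*} (f : ∀ t : ℕ, (Fin (t + 1) → S) → X) (B j : ℕ) (s : ℕ → S)
    (t : ℕ) : Option X :=
  if j ≤ t ∧ t ≤ j + B - 1 then none else some (chanStream f s t)

/-- The streaming code `f` corrects erasure bursts of length `B` with delay `T`: there are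
decoding functions `γ t` recovering `s t` from the channel outputs `y 0, …, y (t + T)`,
for every source stream `s` and every burst starting position `j`. -/
def Corrects {S X : Type*} (f : ∀ t : ℕ, (Fin (t + 1) → S) → X) (B T : ℕ) : Prop :=
  ∃ γ : ∀ t : ℕ, (Fin (t + T + 1) → Option X) → S,
    ∀ (s : ℕ → S) (j t : ℕ), γ t (fun i => burstOut f B j s i.val) = s t

lemma chanStream_congr {S X : Type*} (f : ∀ t : ℕ, (Fin (t + 1) → S) → X) {s s' : ℕ → S}
    {t : ℕ} (h : ∀ i ≤ t, s i = s' i) : chanStream f s t = chanStream f s' t := by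
  unfold chanStream
  congr 1
  funext i
  exact h i.val (Nat.lt_succ_iff.mp i.isLt)

lemma decode_eq {S X : Type*} (f : ∀ t : ℕ, (Fin (t + 1) → S) → X) {B' T' : ℕ}
    (h : Corrects f B' T') (j t : ℕ) (s s' : ℕ → S)
    (hx : ∀ t' ≤ t + T', ¬(j ≤ t' ∧ t' ≤ j + B' - 1) →
      chanStream f s t' = chanStream f s' t') :
    s t = s' t := by
  obtain ⟨γ, hγ⟩ := h
  have e1 := hγ s j t
  have e2 := hγ s' j t
  rw [← e1, ← e2]
  congr 1
  funext i
  unfold burstOut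
  by_cases hc : j ≤ i.val ∧ i.val ≤ j + B' - 1
  · rw [if_pos hc, if_pos hc]
  · rw [if_neg hc, if_neg hc]
    exact congrArg some (hx i.val (Nat.lt_succ_iff.mp i.isLt) hc)

lemma key_decode {S X : Type*} (f : ∀ t : ℕ, (Fin (t + 1) → S) → X)
    (B T α T₂ : ℕ) (hB : 1 ≤ B) (hBT : B ≤ T) (hα : 2 ≤ α) (hT₂low : T + B ≤ T₂)
    (h1 : Corrects f B T) (h2 : Corrects f (α * B) T₂)
    (m : ℕ) (s s' : ℕ → S)
    (H : ∀ t' i' r', i' ≤ m → α * B ≤ r' → r' < (α - 1) * B + T₂ →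
      t' = i' * ((α - 1) * B + T₂) + r' → chanStream f s t' = chanStream f s' t') :
    ∀ t < m * ((α - 1) * B + T₂), s t = s' t := by
  set P := (α - 1) * B + T₂ with hPdef
  have hαB : α * B = (α - 1) * B + B := by
    have h' : α - 1 + 1 = α := by omega
    calc α * B = (α - 1 + 1) * B := by rw [h']
    _ = (α - 1) * B + B := by ring
  have hBA : B ≤ (α - 1) * B := Nat.le_mul_of_pos_left B (by omega)
  have hP0 : 0 < P := by omega
  intro t
  induction t using Nat.strong_induction_on with
  | _ t IH =>
  intro ht
  have hcs : ∀ t' < t, chanStream f s t' = chanStream f s' t' := by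
    intro t' ht'
    exact chanStream_congr f (fun i hi => IH i (by omega) (by omega))
  obtain ⟨i, r, hdm, hrP, him⟩ : ∃ i r, t = i * P + r ∧ r < P ∧ i < m := by
    refine ⟨t / P, t % P, ?_, Nat.mod_lt _ hP0, ?_⟩
    · exact (Nat.div_add_mod' t P).symm
    · exact (Nat.div_lt_iff_lt_mul hP0).mpr ht
  have hP1 : (i + 1) * P = i * P + P := by ring
  rcases lt_or_ge r ((α - 1) * B) with hcase | hcase
  · -- Case A : r < (α-1)*B ; decode via h2 with burst at i*P
    apply decode_eq f h2 (i * P) t s s'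
    intro t' ht' hne
    rcases lt_or_ge t' t with h' | h'
    · exact hcs t' h'
    · exact H t' i (t' - i * P) him.le (by omega) (by omega) (by omega)
  rcases lt_or_ge r (α * B) with hcase2 | hcase2
  · -- Case B : (α-1)*B ≤ r < α*B ; decode via h1 with burst at i*P + (α-1)*B
    apply decode_eq f h1 (i * P + (α - 1) * B) t s s'
    intro t' ht' hne
    rcases lt_or_ge t' t with h' | h'
    · exact hcs t' h'
    · exact H t' i (t' - i * P) him.le (by omega) (by omega) (by omega)
  · -- Case C : α*B ≤ r ; decode via h2 with burst at (i+1)*P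
    apply decode_eq f h2 ((i + 1) * P) t s s'
    intro t' ht' hne
    rcases lt_or_ge t' t with h' | h'
    · exact hcs t' h'
    · rcases lt_or_ge t' ((i + 1) * P) with h'' | h''
      · exact H t' i (t' - i * P) him.le (by omega) (by omega) (by omega)
      · exact H t' (i + 1) (t' - (i + 1) * P) him (by omega) (by omega) (by omega)

/-- Converse, case `T + B ≤ T₂ < α*T + B`: any streaming code over a finite field that
corrects bursts of length `B` with delay `T` and bursts of length `α*B` with delay `T₂`
has rate `k/n ≤ 1 - α*B/((α-1)*B + T₂) < T/(T+B)`. -/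
theorem stmt_2 (B T α T₂ : ℕ) (hB : 1 ≤ B) (hBT : B ≤ T) (hα : 2 ≤ α)
    (hT₂low : T + B ≤ T₂) (hT₂high : T₂ < α * T + B)
    (F : Type) [Field F] [Fintype F] (k n : ℕ) (hk : 1 ≤ k)
    (f : ∀ t : ℕ, (Fin (t + 1) → (Fin k → F)) → (Fin n → F))
    (h1 : Corrects f B T) (h2 : Corrects f (α * B) T₂) :
    (k : ℚ) / (n : ℚ) ≤ 1 - ((α : ℚ) * (B : ℚ)) / (((α : ℚ) - 1) * (B : ℚ) + (T₂ : ℚ)) ∧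
    (k : ℚ) / (n : ℚ) < (T : ℚ) / ((T : ℚ) + (B : ℚ)) := by
  classical
  set P := (α - 1) * B + T₂ with hPdef
  have hαB : α * B = (α - 1) * B + B := by
    have h' : α - 1 + 1 = α := by omega
    calc α * B = (α - 1 + 1) * B := by rw [h']
    _ = (α - 1) * B + B := by ring
  have hBA : B ≤ (α - 1) * B := Nat.le_mul_of_pos_left B (by omega)
  have hαBP : α * B < P := by omega
  set d := P - α * B with hddef
  have hq : 1 < Fintype.card F := Fintype.one_lt_card
  -- counting bound for each number of periods m
  have main : ∀ m : ℕ, k * (m * P) ≤ n * ((m + 1) * d) := by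
    intro m
    have hinj : Function.Injective (fun (s₀ : Fin (m * P) → Fin k → F) =>
        fun (p : Fin (m + 1) × Fin d) =>
          chanStream f (fun t => if h : t < m * P then s₀ ⟨t, h⟩ else 0)
            (p.1.val * P + α * B + p.2.val)) := by
      intro s₀ s₀' hEq
      set sb : ℕ → (Fin k → F) := fun t => if h : t < m * P then s₀ ⟨t, h⟩ else 0 with hsb
      set sb' : ℕ → (Fin k → F) := fun t => if h : t < m * P then s₀' ⟨t, h⟩ else 0 with hsb'
      have hk2 := key_decode f B T α T₂ hB hBT hα hT₂low h1 h2 m sb sb' ?_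
      · funext x
        have := hk2 x.val x.isLt
        simpa [hsb, hsb', x.isLt] using this
      · intro t' i' r' hi' hr1 hr2 ht'
        have := congrFun hEq ⟨⟨i', by omega⟩, ⟨r' - α * B, by omega⟩⟩
        simp only at this
        rw [← hPdef] at hr2 ht'
        have harg : i' * P + α * B + (r' - α * B) = t' := by omega
        rw [harg] at this
        exact this
    have hcard := Fintype.card_le_of_injective _ hinj
    simp only [Fintype.card_fun, Fintype.card_fin, Fintype.card_prod] at hcard
    rw [← pow_mul, ← pow_mul] at hcard
    exact (Nat.pow_le_pow_iff_right hq).mp hcard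
  -- derive k*P ≤ n*d from the family of bounds
  have hkP : k * P ≤ n * d := by
    by_contra hcon
    push_neg at hcon
    have hmain := main (n * d + 1)
    have e1 : k * ((n * d + 1) * P) = (n * d + 1) * (k * P) := by ring
    have e2 : n * ((n * d + 1 + 1) * d) = (n * d + 2) * (n * d) := by ring
    rw [e1, e2] at hmain
    have e3 : (n * d + 1) * (n * d + 1) ≤ (n * d + 1) * (k * P) :=
      Nat.mul_le_mul_left _ hcon
    nlinarith [hmain, e3]
  have hP0 : 0 < P := by omega
  have hd0 : 0 < d := by omega
  have hn0 : 0 < n := by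
    rcases Nat.eq_zero_or_pos n with h | h
    · exfalso
      rw [h, Nat.zero_mul] at hkP
      have : 0 < k * P := Nat.mul_pos (by omega) hP0
      omega
    · exact h
  -- rational versions
  have hcastα : ((α - 1 : ℕ) : ℚ) = (α : ℚ) - 1 := by
    exact_mod_cast Nat.cast_sub (by omega : (1:ℕ) ≤ α)
  have hPQ : ((α : ℚ) - 1) * (B : ℚ) + (T₂ : ℚ) = (P : ℚ) := by
    rw [hPdef]
    push_cast [hcastα]
    ring
  have hdQ : (d : ℚ) = (P : ℚ) - (α : ℚ) * (B : ℚ) := by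
    rw [hddef, Nat.cast_sub hαBP.le]
    push_cast
    ring
  have hnQ : (0:ℚ) < (n : ℚ) := by exact_mod_cast hn0
  have hPQ0 : (0:ℚ) < (P : ℚ) := by exact_mod_cast hP0
  have hfrac : (k : ℚ) / (n : ℚ) ≤ (d : ℚ) / (P : ℚ) := by
    rw [div_le_div_iff₀ hnQ hPQ0]
    have : (k : ℚ) * P ≤ (n : ℚ) * d := by exact_mod_cast hkP
    linarith
  constructor
  · rw [hPQ]
    have hrw : (1:ℚ) - (α : ℚ) * (B : ℚ) / (P : ℚ) = (d : ℚ) / (P : ℚ) := by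
      rw [hdQ]
      field_simp
    rw [hrw]
    exact hfrac
  · refine lt_of_le_of_lt hfrac ?_
    have hTB0 : (0:ℚ) < (T : ℚ) + (B : ℚ) := by
      have : (0:ℚ) < (B : ℚ) := by exact_mod_cast hB
      positivity
    rw [div_lt_div_iff₀ hPQ0 hTB0]
    have hdval : (d : ℚ) = (T₂ : ℚ) - (B : ℚ) := by
      rw [hdQ, ← hPQ]
      ring
    have hPval : (P : ℚ) = ((α : ℚ) - 1) * (B : ℚ) + (T₂ : ℚ) := hPQ.symm
    rw [hdval, hPval]
    have hh : (T₂ : ℚ) < (α : ℚ) * (T : ℚ) + (B : ℚ) := by exact_mod_cast hT₂high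
    have hB' : (1:ℚ) ≤ (B : ℚ) := by exact_mod_cast hB
    have hBT' : (B : ℚ) ≤ (T : ℚ) := by exact_mod_cast hBT
    have hα' : (2:ℚ) ≤ (α : ℚ) := by exact_mod_cast hα
    nlinarith [mul_lt_mul_of_pos_left hh (lt_of_lt_of_le one_pos hB')]
end

section
/- Let T ≥ B ≥ 1 and α ≥ 2 be integers and let T₂ be an integer with T₂ ≤ T + B. Then every streaming code over a finite field F_q with source alphabet F_q^k (k ≥ 1) and channel alphabet F_q^n that corrects erasure bursts of length B with delay T and also corrects erasure bursts of length αB with delay T₂ satisfies k/n ≤ T/(T + αB); in particular its rate satisfies k/n < T/(T+B). -/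
lemma chan_congr {S X : Type*} (f : ∀ t : ℕ, (Fin (t + 1) → S) → X) (s s' : ℕ → S) (u : ℕ)
    (h : ∀ i ≤ u, s i = s' i) : chanStream f s u = chanStream f s' u := by
  unfold chanStream
  congr 1
  funext i
  exact h i.val (Nat.le_of_lt_succ i.isLt)

lemma mod_eq_sub {P q i : ℕ} (h1 : P*q ≤ i) (h2 : i < P*q + P) : i % P = i - P*q := by
  have h3 : i = P*q + (i - P*q) := by omega
  calc i % P = (P*q + (i-P*q)) % P := by rw [← h3]
    _ = (i - P*q) % P := Nat.mul_add_mod P q _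
    _ = i - P*q := Nat.mod_eq_of_lt (by omega)

lemma key {S X : Type*} (B T α T₂ : ℕ) (hB : 1 ≤ B) (hBT : B ≤ T) (hα : 2 ≤ α)
    (hT₂ : T₂ ≤ T + B)
    (f : ∀ t : ℕ, (Fin (t + 1) → S) → X)
    (h1 : Corrects f B T) (h2 : Corrects f (α * B) T₂)
    (s s' : ℕ → S) :
    ∀ t, (∀ u, u ≤ t + (T + B) → ¬ (u % (T + α * B) < α * B) →
        chanStream f s u = chanStream f s' u) → s t = s' t := by
  obtain ⟨γ₁, hγ₁⟩ := h1
  obtain ⟨γ₂, hγ₂⟩ := h2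
  intro t
  induction t using Nat.strong_induction_on with
  | _ t IH =>
  intro H
  have hαB : 2 * B ≤ α * B := Nat.mul_le_mul_right B hα
  set P := T + α * B with hP
  have hPpos : 0 < P := by omega
  have hlt : ∀ i < t, s i = s' i := fun i hi => IH i hi (fun u hu hne => H u (by omega) hne)
  have hchanlt : ∀ i < t, chanStream f s i = chanStream f s' i := fun i hi =>
    chan_congr f s s' i (fun u hu => hlt u (lt_of_le_of_lt hu hi))
  have hq : P * (t / P) + t % P = t := Nat.div_add_mod t P
  set q := t / P with hqdef
  set r := t % P with hrdef
  have hr : r < P := Nat.mod_lt t hPpos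
  have step : ∀ (B' T' : ℕ) (γ : ∀ u : ℕ, (Fin (u + T' + 1) → Option X) → S),
      (∀ (z : ℕ → S) (j u : ℕ), γ u (fun i => burstOut f B' j z i.val) = z u) →
      ∀ j : ℕ, T' ≤ T + B →
      (∀ i, t ≤ i → i ≤ t + T' → ¬(j ≤ i ∧ i ≤ j + B' - 1) → ¬ (i % P < α * B)) →
      s t = s' t := by
    intro B' T' γ hγ j hT' harith
    have hall : (fun i : Fin (t + T' + 1) => burstOut f B' j s i.val)
        = (fun i : Fin (t + T' + 1) => burstOut f B' j s' i.val) := by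
      funext i
      have hi : i.val ≤ t + T' := Nat.le_of_lt_succ i.isLt
      unfold burstOut
      split_ifs with h
      · rfl
      · congr 1
        rcases lt_or_ge i.val t with hit | hit
        · exact hchanlt i.val hit
        · exact H i.val (by omega) (harith i.val hit hi h)
    calc s t = γ t (fun i => burstOut f B' j s i.val) := (hγ s j t).symm
      _ = γ t (fun i => burstOut f B' j s' i.val) := by rw [hall]
      _ = s' t := hγ s' j t
  rcases lt_or_ge r (α * B) with hcase | hcase
  · rcases lt_or_ge r (α * B - B) with hA | hB'
    · -- early part of the burst: use the (α*B, T₂) decoder with burst at P*q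
      refine step (α * B) T₂ γ₂ hγ₂ (P * q) hT₂ ?_
      intro i hti hiT hnb
      have h1i : P * q ≤ i := by omega
      have h2i : i < P * q + P := by omega
      have hm := mod_eq_sub h1i h2i
      omega
    · -- last B symbols of the burst: use the (B, T) decoder with burst at P*q + α*B - B
      refine step B T γ₁ hγ₁ (P * q + α * B - B) (by omega) ?_
      intro i hti hiT hnb
      have h1i : P * q ≤ i := by omega
      have h2i : i < P * q + P := by omega
      have hm := mod_eq_sub h1i h2i
      omega
  · -- unerased position: use the (α*B, T₂) decoder with burst at the next period
    refine step (α * B) T₂ γ₂ hγ₂ (P * q + P) hT₂ ?_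
    intro i hti hiT hnb
    rcases lt_or_ge i (P * q + P) with hcc | hcc
    · have hm := mod_eq_sub (show P * q ≤ i by omega) hcc
      omega
    · have hPP : P * (q + 1) = P * q + P := by ring
      have hm := mod_eq_sub (P := P) (q := q + 1) (i := i) (by omega) (by omega)
      omega

/-- Converse, case `T₂ ≤ T + B`: any streaming code over a finite field that corrects
bursts of length `B` with delay `T` and bursts of length `α*B` with delay `T₂` has rate
`k/n ≤ T/(T + α*B) < T/(T+B)`. -/
theorem stmt_3 (B T α T₂ : ℕ) (hB : 1 ≤ B) (hBT : B ≤ T) (hα : 2 ≤ α)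
    (hT₂ : T₂ ≤ T + B)
    (F : Type) [Field F] [Fintype F] (k n : ℕ) (hk : 1 ≤ k)
    (f : ∀ t : ℕ, (Fin (t + 1) → (Fin k → F)) → (Fin n → F))
    (h1 : Corrects f B T) (h2 : Corrects f (α * B) T₂) :
    (k : ℚ) / (n : ℚ) ≤ (T : ℚ) / ((T : ℚ) + (α : ℚ) * (B : ℚ)) ∧
    (k : ℚ) / (n : ℚ) < (T : ℚ) / ((T : ℚ) + (B : ℚ)) := by
  classical
  have hq2 : 1 < Fintype.card F := Fintype.one_lt_card
  have hαB : 2 * B ≤ α * B := Nat.mul_le_mul_right B hα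
  have hPpos : 0 < T + α * B := by omega
  have hcount : ∀ m : ℕ, k * (m * (T + α * B)) ≤ n * ((m + 1) * T) := by
    intro m
    set P := T + α * B with hP
    set N := m * P with hN
    let ext : (Fin N → Fin k → F) → ℕ → Fin k → F := fun σ t =>
      if h : t < N then σ ⟨t, h⟩ else 0
    let U := {u : Fin (N + T + B) // ¬ (u.val % P < α * B)}
    let Φ : (Fin N → Fin k → F) → (U → Fin n → F) := fun σ u => chanStream f (ext σ) u.val.val
    have hΦ : Function.Injective Φ := by
      intro σ σ' hσ
      have hrec : ∀ t, t < N → ext σ t = ext σ' t := by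
        intro t ht
        refine key B T α T₂ hB hBT hα hT₂ f h1 h2 (ext σ) (ext σ') t ?_
        intro u hu hne
        have hu' : u < N + T + B := by omega
        exact congrFun hσ ⟨⟨u, hu'⟩, hne⟩
      funext i
      have h := hrec i.val i.isLt
      simpa [ext, i.isLt] using h
    have hP1 : ∀ u : ℕ, u < N + T + B → u / P < m + 1 := by
      intro u hu
      have h1' : (m + 1) * P = N + P := by rw [hN]; ring
      refine (Nat.div_lt_iff_lt_mul hPpos).mpr ?_
      omega
    have hP2 : ∀ u : ℕ, ¬ (u % P < α * B) → u % P - α * B < T := by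
      intro u h
      have := Nat.mod_lt u hPpos
      omega
    let ψ : U → Fin (m + 1) × Fin T := fun u =>
      (⟨u.val.val / P, hP1 _ u.val.isLt⟩, ⟨u.val.val % P - α * B, hP2 _ u.prop⟩)
    have hψ : Function.Injective ψ := by
      intro u v huv
      have e1 : u.val.val / P = v.val.val / P := congrArg (fun p => p.1.val) huv
      have e2 : u.val.val % P - α * B = v.val.val % P - α * B :=
        congrArg (fun p => p.2.val) huv
      have d1 := Nat.div_add_mod u.val.val P
      have d2 := Nat.div_add_mod v.val.val P
      have e3 : P * (u.val.val / P) = P * (v.val.val / P) := by rw [e1]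
      have pu := u.prop
      have pv := v.prop
      apply Subtype.ext
      apply Fin.ext
      omega
    have hcardU : Fintype.card U ≤ (m + 1) * T := by
      calc Fintype.card U ≤ Fintype.card (Fin (m + 1) × Fin T) :=
            Fintype.card_le_of_injective ψ hψ
        _ = (m + 1) * T := by simp
    have hcard1 := Fintype.card_le_of_injective Φ hΦ
    have hL : Fintype.card (Fin N → Fin k → F) = Fintype.card F ^ (k * N) := by
      rw [Fintype.card_fun, Fintype.card_fun, Fintype.card_fin, Fintype.card_fin,
        ← pow_mul, Nat.mul_comm]
    have hR : Fintype.card (U → Fin n → F) = Fintype.card F ^ (n * Fintype.card U) := by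
      rw [Fintype.card_fun, Fintype.card_fun, Fintype.card_fin, ← pow_mul, Nat.mul_comm]
    rw [hL, hR] at hcard1
    have hkn : k * N ≤ n * Fintype.card U := (Nat.pow_le_pow_iff_right hq2).mp hcard1
    calc k * (m * P) = k * N := rfl
      _ ≤ n * Fintype.card U := hkn
      _ ≤ n * ((m + 1) * T) := Nat.mul_le_mul_left n hcardU
  have hfin : k * (T + α * B) ≤ n * T := by
    by_contra hcon
    push_neg at hcon
    have h0 := hcount (n * T + 1)
    have hcon' : n * T + 1 ≤ k * (T + α * B) := hcon
    have e1 : k * ((n * T + 1) * (T + α * B)) = (n * T + 1) * (k * (T + α * B)) := by ring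
    have e2 : n * ((n * T + 1 + 1) * T) = (n * T) * (n * T) + 2 * (n * T) := by ring
    have e3 : (n * T + 1) * (n * T + 1) ≤ (n * T + 1) * (k * (T + α * B)) :=
      Nat.mul_le_mul_left _ hcon'
    have e4 : (n * T + 1) * (n * T + 1) = (n * T) * (n * T) + 2 * (n * T) + 1 := by ring
    omega
  have hnpos : 0 < n := by
    rcases Nat.eq_zero_or_pos n with h | h
    · subst h
      simp at hfin
      have := Nat.mul_pos (show 0 < k by omega) hPpos
      omega
    · exact h
  have hT0 : (0 : ℚ) < T := by exact_mod_cast (show 0 < T by omega)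
  have hB0 : (0 : ℚ) < B := by exact_mod_cast (show 0 < B by omega)
  have hn0 : (0 : ℚ) < n := by exact_mod_cast hnpos
  have hαB0 : (0 : ℚ) < (α : ℚ) * B := by
    have : (0 : ℚ) < ((α * B : ℕ) : ℚ) := by exact_mod_cast (show 0 < α * B by omega)
    push_cast at this
    linarith
  have hc1 : (k : ℚ) * ((T : ℚ) + (α : ℚ) * B) ≤ (T : ℚ) * n := by
    have h := (show ((k * (T + α * B) : ℕ) : ℚ) ≤ ((n * T : ℕ) : ℚ) by exact_mod_cast hfin)
    push_cast at h
    linarith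
  have main : (k : ℚ) / (n : ℚ) ≤ (T : ℚ) / ((T : ℚ) + (α : ℚ) * (B : ℚ)) := by
    rw [div_le_div_iff₀ hn0 (by linarith)]
    linarith
  refine ⟨main, lt_of_le_of_lt main ?_⟩
  apply div_lt_div_of_pos_left hT0 (by linarith)
  have : (B : ℚ) < (α : ℚ) * B := by
    have h2B : ((2 * B : ℕ) : ℚ) ≤ ((α * B : ℕ) : ℚ) := by exact_mod_cast hαB
    push_cast at h2B
    linarith
  linarith
end

section
/- Let B ≥ 1 and T ≥ 0 be integers. (i) If T < B, then there is no streaming code over any finite field F_q with source alphabet F_q^k for k ≥ 1 and any channel alphabet F_q^n that corrects erasure bursts of length B with delay T. (ii) If T ≥ B, then every streaming code with source alphabet F_q^k (k ≥ 1) and channel alphabet F_q^n that corrects erasure bursts of length B with delay T satisfies k/n ≤ T/(T+B). -/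
section Aux
variable {S X : Type*}

lemma chan_prefix (f : ∀ t : ℕ, (Fin (t + 1) → S) → X) {s s' : ℕ → S} {t i : ℕ}
    (h : ∀ u, u < t → s u = s' u) (hi : i < t) :
    chanStream f s i = chanStream f s' i := by
  unfold chanStream
  congr 1
  funext j
  exact h j.val (lt_of_le_of_lt (Nat.le_of_lt_succ j.isLt) hi)

lemma key_s6 {B T : ℕ} (hB : 1 ≤ B) (hBT : B ≤ T)
    (f : ∀ t : ℕ, (Fin (t + 1) → S) → X)
    (γ : ∀ t : ℕ, (Fin (t + T + 1) → Option X) → S)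
    (hγ : ∀ (s : ℕ → S) (j t : ℕ), γ t (fun i => burstOut f B j s i.val) = s t)
    (M : ℕ) (s s' : ℕ → S)
    (H : ∀ i, i < M + T → B ≤ i % (T + B) → chanStream f s i = chanStream f s' i) :
    ∀ t, t < M → s t = s' t := by
  intro t
  induction t using Nat.strong_induction_on with
  | _ t IH =>
    intro htM
    have hp0 : 0 < T + B := by omega
    obtain ⟨J, r, hJr, hrlt, hmodJ⟩ :
        ∃ J r, J + r = t ∧ r < T + B ∧ ∀ d, (J + d) % (T + B) = d % (T + B) :=
      ⟨(T + B) * (t / (T + B)), t % (T + B), Nat.div_add_mod t (T + B),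
        Nat.mod_lt _ hp0, fun d => Nat.mul_add_mod (T + B) (t / (T + B)) d⟩
    by_cases hcase : r < B
    · -- t is in an erased block: use burst starting at J (J ≤ t)
      have heq : (fun i : Fin (t + T + 1) => burstOut f B J s i.val)
               = (fun i : Fin (t + T + 1) => burstOut f B J s' i.val) := by
        funext i
        have hile : (i : ℕ) ≤ t + T := Nat.le_of_lt_succ i.isLt
        unfold burstOut
        by_cases hw : J ≤ (i : ℕ) ∧ (i : ℕ) ≤ J + B - 1
        · simp [hw]
        · rw [if_neg hw, if_neg hw]
          congr 1
          by_cases hmod : B ≤ (i : ℕ) % (T + B)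
          · exact H i (by omega) hmod
          · have hiJ : (i : ℕ) < J := by
              by_contra hge
              push_neg at hge
              have hd : (i : ℕ) = J + ((i : ℕ) - J) := by omega
              have hm := hmodJ ((i : ℕ) - J)
              rw [← hd] at hm
              have hdp : (i : ℕ) - J < T + B := by omega
              rw [Nat.mod_eq_of_lt hdp] at hm
              omega
            exact chan_prefix f (fun u hu => IH u hu (by omega)) (by omega)
      have h1 := hγ s J t
      have h2 := hγ s' J t
      rw [heq] at h1
      exact h1.symm.trans h2
    · -- t is in an unerased block: use burst starting at J + (T+B)
      have heq : (fun i : Fin (t + T + 1) => burstOut f B (J + (T + B)) s i.val)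
               = (fun i : Fin (t + T + 1) => burstOut f B (J + (T + B)) s' i.val) := by
        funext i
        have hile : (i : ℕ) ≤ t + T := Nat.le_of_lt_succ i.isLt
        unfold burstOut
        by_cases hw : J + (T + B) ≤ (i : ℕ) ∧ (i : ℕ) ≤ J + (T + B) + B - 1
        · simp [hw]
        · rw [if_neg hw, if_neg hw]
          congr 1
          by_cases hmod : B ≤ (i : ℕ) % (T + B)
          · exact H i (by omega) hmod
          · have hiJ : (i : ℕ) < t := by
              rcases lt_or_ge (i : ℕ) (J + B) with h' | h'
              · omega
              · exfalso
                have hd : (i : ℕ) = J + ((i : ℕ) - J) := by omega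
                have hm := hmodJ ((i : ℕ) - J)
                rw [← hd] at hm
                have hup : (i : ℕ) - J ≤ r + T := by omega
                rcases lt_or_ge ((i : ℕ) - J) (T + B) with h2 | h2
                · rw [Nat.mod_eq_of_lt h2] at hm
                  omega
                · have h5 : (i : ℕ) - J - (T + B) < T + B := by omega
                  rw [Nat.mod_eq_sub_mod h2, Nat.mod_eq_of_lt h5] at hm
                  exact hw ⟨by omega, by omega⟩
            exact chan_prefix f (fun u hu => IH u hu (by omega)) hiJ
      have h1 := hγ s (J + (T + B)) t
      have h2 := hγ s' (J + (T + B)) t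
      rw [heq] at h1
      exact h1.symm.trans h2

end Aux

/-- Single-user converse. (i) If `T < B`, no streaming code over a finite field with
nontrivial source alphabet `F^k` (`k ≥ 1`) corrects bursts of length `B` with delay `T`.
(ii) If `T ≥ B`, every such code correcting bursts of length `B` with delay `T` has rate
`k/n ≤ T/(T+B)`. -/
theorem stmt_6 (B T : ℕ) (hB : 1 ≤ B)
    (F : Type) [Field F] [Fintype F] (k n : ℕ) (hk : 1 ≤ k)
    (f : ∀ t : ℕ, (Fin (t + 1) → (Fin k → F)) → (Fin n → F)) :
    (T < B → ¬ Corrects f B T) ∧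
    (B ≤ T → Corrects f B T → (k : ℚ) / (n : ℚ) ≤ (T : ℚ) / ((T : ℚ) + (B : ℚ))) := by
  constructor
  · -- (i)
    rintro hTB ⟨γ, hγ⟩
    have hall : ∀ s : ℕ → (Fin k → F),
        (fun i : Fin (0 + T + 1) => burstOut f B 0 s i.val) = fun _ => none := by
      intro s
      funext i
      have : (i : ℕ) ≤ T := by omega
      unfold burstOut
      rw [if_pos ⟨Nat.zero_le _, by omega⟩]
    have h0 := hγ (fun _ => (0 : Fin k → F)) 0 0
    have h1 := hγ (fun _ => (1 : Fin k → F)) 0 0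
    rw [hall] at h0 h1
    have : (0 : Fin k → F) = 1 := h0.symm.trans h1
    have := congrFun this ⟨0, hk⟩
    exact zero_ne_one this
  · -- (ii)
    rintro hBT ⟨γ, hγ⟩
    have hq : 1 < Fintype.card F := Fintype.one_lt_card
    -- main counting inequality
    have main : ∀ m : ℕ, k * (m * (T + B)) ≤ n * ((m + 1) * T) := by
      intro m
      set M := m * (T + B) with hM
      set D := {i : Fin (M + T) // B ≤ i.val % (T + B)} with hD
      -- extension of a finite tuple by zero
      set ext : (Fin M → (Fin k → F)) → (ℕ → (Fin k → F)) :=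
        fun σ i => if h : i < M then σ ⟨i, h⟩ else 0 with hext
      set Φ : (Fin M → (Fin k → F)) → (D → (Fin n → F)) :=
        fun σ i => chanStream f (ext σ) i.val.val with hΦdef
      have hΦ : Function.Injective Φ := by
        intro σ σ' hσ
        have hkey := key_s6 hB hBT f γ hγ M (ext σ) (ext σ')
          (fun i hi hBi => congrFun hσ ⟨⟨i, hi⟩, hBi⟩)
        funext u
        have := hkey u.val u.isLt
        simpa [hext, u.isLt] using this
      have hcard1 : Fintype.card (Fin M → (Fin k → F)) ≤ Fintype.card (D → (Fin n → F)) :=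
        Fintype.card_le_of_injective Φ hΦ
      -- bound card D
      have hψ : Fintype.card D ≤ (m + 1) * T := by
        have hinj : Function.Injective (fun i : D =>
            ((⟨i.val.val / (T + B), by
                have hi := i.val.isLt
                have he : (T + B) * (m + 1) = m * (T + B) + (T + B) := by ring
                exact Nat.div_lt_of_lt_mul (by omega)⟩ : Fin (m + 1)),
             (⟨i.val.val % (T + B) - B, by
                have := Nat.mod_lt i.val.val (show 0 < T + B by omega)
                have hBi := i.property
                omega⟩ : Fin T))) := by
          rintro ⟨⟨i, hi⟩, hi2⟩ ⟨⟨i', hi'⟩, hi2'⟩ h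
          simp only [Prod.mk.injEq, Fin.mk.injEq] at h
          have h1 := Nat.div_add_mod i (T + B)
          have h2 := Nat.div_add_mod i' (T + B)
          have h3 : (T + B) * (i / (T + B)) = (T + B) * (i' / (T + B)) := by rw [h.1]
          have hBi : B ≤ i % (T + B) := hi2
          have hBi' : B ≤ i' % (T + B) := hi2'
          have : i = i' := by omega
          simp [this]
        have := Fintype.card_le_of_injective _ hinj
        simpa using this
      have hcL : Fintype.card (Fin M → (Fin k → F)) = Fintype.card F ^ (k * M) := by
        simp [Fintype.card_fun, pow_mul]
      have hcR : Fintype.card (D → (Fin n → F)) = (Fintype.card F ^ n) ^ Fintype.card D := by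
        simp [Fintype.card_fun]
      have hfinal : Fintype.card F ^ (k * M) ≤ Fintype.card F ^ (n * ((m + 1) * T)) := by
        calc Fintype.card F ^ (k * M) ≤ (Fintype.card F ^ n) ^ Fintype.card D := by
              rw [← hcL, ← hcR]; exact hcard1
          _ ≤ (Fintype.card F ^ n) ^ ((m + 1) * T) :=
              Nat.pow_le_pow_right (Nat.one_le_pow _ _ (by omega)) hψ
          _ = Fintype.card F ^ (n * ((m + 1) * T)) := by rw [← pow_mul]
      exact (Nat.pow_le_pow_iff_right hq).mp hfinal
    -- deduce k * (T+B) ≤ n * T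
    have hkn : k * (T + B) ≤ n * T := by
      by_contra hc
      push_neg at hc
      have h1 := main (n * T + 1)
      have e1 : k * ((n * T + 1) * (T + B)) = (k * (T + B)) * (n * T + 1) := by ring
      have e2 : n * ((n * T + 1 + 1) * T) = (n * T) * (n * T + 2) := by ring
      rw [e1, e2] at h1
      have e3 : (n * T + 1) * (n * T + 1) ≤ (k * (T + B)) * (n * T + 1) :=
        Nat.mul_le_mul_right _ (by omega)
      have e4 : (n * T + 1) * (n * T + 1) = (n * T) * (n * T + 2) + 1 := by ring
      omega
    -- conclude in ℚ
    rcases Nat.eq_zero_or_pos n with hn | hn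
    · subst hn
      simp
      positivity
    · rw [div_le_div_iff₀ (by positivity) (by positivity)]
      have : (k : ℚ) * (T + B) ≤ (n : ℚ) * T := by exact_mod_cast hkn
      linarith [this]
end

section
/- For all integers T ≥ B ≥ 1, there exist a finite field F_q and a streaming code with source alphabet F_q^T and channel alphabet F_q^{T+B} (hence of rate T/(T+B)) that corrects erasure bursts of length B with delay T. Moreover, the encoder can be chosen to be systematic (the first T coordinates of x[t] equal s[t]), time-invariant, linear, and with memory T: x[t] = f(s[t−T], s[t−T+1], …, s[t]) for a fixed F_q-linear map f, where s[τ] := 0 for τ < 0. -/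
/-- `g` is a good SCo encoder kernel for parameters `(B, T)`: it is `F`-linear, systematic
(the first `T` output coordinates equal the most recent source symbol in the window), and
the time-invariant memory-`T` streaming code `x[t] = g (s[t-T], …, s[t])` (with zero padding
for negative times) corrects erasure bursts of length `B` with delay `T`. -/
def IsGoodSCoEncoder {F : Type*} [Field F] (B T : ℕ)
    (g : (Fin (T + 1) → Fin T → F) → (Fin (T + B) → F)) : Prop :=
  IsLinearMap F g ∧
  (∀ (w : Fin (T + 1) → Fin T → F) (i : Fin T), g w (Fin.castAdd B i) = w (Fin.last T) i) ∧
  Corrects (fun t hist => g fun d =>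
    if h : T ≤ t + d.val then hist ⟨t + d.val - T, by have := d.isLt; omega⟩ else 0) B T

namespace SCoDev

variable {F : Type} [Field F]

/-- The encoder kernel. -/
def enc (B T : ℕ) (hB : 1 ≤ B) (hBT : B ≤ T) (F : Type) [Field F]
    (w : Fin (T + 1) → Fin T → F) (x : Fin (T + B)) : F :=
  if (x : ℕ) < T then w (Fin.last T) ⟨(x : ℕ) % T, Nat.mod_lt _ (by omega)⟩
  else
    (∑ k : Fin (T % B),
      if ((x : ℕ) - T) * (T % B) < B + (k : ℕ) * B ∧
          B + (k : ℕ) * B ≤ T + ((x : ℕ) - T) * (T % B) then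
        w ⟨(T + ((x : ℕ) - T) * (T % B) - (B + (k : ℕ) * B)) % (T + 1),
            Nat.mod_lt _ (by omega)⟩
          ⟨(k : ℕ), by
            have h1 := k.isLt
            have h2 : T % B < B := Nat.mod_lt _ (by omega)
            omega⟩
      else 0)
    + ∑ l : Fin (T / B),
      w ⟨T - (B + T % B + (l : ℕ) * B), by omega⟩
        ⟨T % B + ((x : ℕ) - T) * (T / B) + (l : ℕ), by
          have h1 := Nat.div_add_mod T B
          have h2 : (((x : ℕ) - T) + 1) * (T / B) ≤ B * (T / B) :=
            Nat.mul_le_mul_right _ (by have := x.isLt; omega)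
          have h3 : ((x : ℕ) - T) * (T / B) + (T / B) = (((x : ℕ) - T) + 1) * (T / B) := by
            ring
          have h4 := l.isLt
          omega⟩

theorem enc_sys (B T : ℕ) (hB : 1 ≤ B) (hBT : B ≤ T)
    (w : Fin (T + 1) → Fin T → F) (i : Fin T) :
    enc B T hB hBT F w (Fin.castAdd B i) = w (Fin.last T) i := by
  have hv : ((Fin.castAdd B i : Fin (T + B)) : ℕ) = (i : ℕ) := rfl
  unfold enc
  rw [if_pos (show ((Fin.castAdd B i : Fin (T + B)) : ℕ) < T by rw [hv]; exact i.isLt)]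
  congr 1
  exact Fin.ext (by simp [hv, Nat.mod_eq_of_lt i.isLt])

theorem enc_lin (B T : ℕ) (hB : 1 ≤ B) (hBT : B ≤ T) :
    IsLinearMap F (enc B T hB hBT F) := by
  constructor
  · intro w w'
    funext x
    unfold enc
    by_cases hx : (x : ℕ) < T
    · simp [if_pos hx]
    · simp only [Pi.add_apply, if_neg hx]
      rw [add_add_add_comm]
      rw [← Finset.sum_add_distrib, ← Finset.sum_add_distrib]
      simp only [ite_add_ite, add_zero]
  · intro c w
    funext x
    unfold enc
    by_cases hx : (x : ℕ) < T
    · simp [if_pos hx]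
    · simp only [Pi.smul_apply, if_neg hx]
      rw [smul_add, Finset.smul_sum, Finset.smul_sum]
      simp only [smul_ite, smul_zero, Pi.smul_apply]

/-- The padded sliding window of a source stream. -/
def Wp (T : ℕ) (s : ℕ → Fin T → F) (τ : ℕ) : Fin (T + 1) → Fin T → F :=
  fun d => if T ≤ τ + (d : ℕ) then s (τ + (d : ℕ) - T) else 0

/-- The streaming code induced by the encoder kernel. -/
def encCode (B T : ℕ) (hB : 1 ≤ B) (hBT : B ≤ T) (F : Type) [Field F] :
    ∀ t : ℕ, (Fin (t + 1) → Fin T → F) → Fin (T + B) → F := fun t hist =>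
  enc B T hB hBT F fun d =>
    if h : T ≤ t + d.val then hist ⟨t + d.val - T, by have := d.isLt; omega⟩ else 0

theorem chan_eq (B T : ℕ) (hB : 1 ≤ B) (hBT : B ≤ T) (s : ℕ → Fin T → F) (τ : ℕ) :
    chanStream (encCode B T hB hBT F) s τ = enc B T hB hBT F (Wp T s τ) := rfl

theorem pad_eval (T : ℕ) (s : ℕ → Fin T → F) (τ i d : ℕ) (hi : i < T + 1) (hid : i + d = T)
    (m : Fin T) :
    Wp T s τ ⟨i, hi⟩ m = if d ≤ τ then s (τ - d) m else 0 := by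
  unfold Wp
  simp only [Fin.val_mk]
  by_cases hd : d ≤ τ
  · rw [if_pos hd]
    have h1 : T ≤ τ + i := by omega
    rw [if_pos h1]
    have h2 : τ + i - T = τ - d := by omega
    rw [h2]
  · rw [if_neg hd, if_neg (by omega)]
    rfl

theorem parity (B T : ℕ) (hB : 1 ≤ B) (hBT : B ≤ T) (s : ℕ → Fin T → F) (τ c : ℕ)
    (hc : c < B) :
    enc B T hB hBT F (Wp T s τ) ⟨T + c, by omega⟩ =
    (∑ k : Fin (T % B),
      if c * (T % B) < B + (k : ℕ) * B ∧ B + (k : ℕ) * B ≤ T + c * (T % B) then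
        (if B + (k : ℕ) * B - c * (T % B) ≤ τ then
           s (τ - (B + (k : ℕ) * B - c * (T % B)))
             ⟨(k : ℕ), by
               have h1 := k.isLt
               have h2 : T % B < B := Nat.mod_lt _ (by omega)
               omega⟩
         else 0)
      else 0)
    + ∑ l : Fin (T / B),
      (if B + T % B + (l : ℕ) * B ≤ τ then
         s (τ - (B + T % B + (l : ℕ) * B))
           ⟨T % B + c * (T / B) + (l : ℕ), by
             have h1 := Nat.div_add_mod T B
             have h2 : (c + 1) * (T / B) ≤ B * (T / B) := Nat.mul_le_mul_right _ (by omega)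
             have h3 : c * (T / B) + T / B = (c + 1) * (T / B) := by ring
             have h4 := l.isLt
             omega⟩
       else 0) := by
  unfold enc
  rw [if_neg (show ¬ ((⟨T + c, by omega⟩ : Fin (T + B)) : ℕ) < T by
    simp only [Fin.val_mk]; omega)]
  simp only [Fin.val_mk, Nat.add_sub_cancel_left]
  congr 1
  · apply Finset.sum_congr rfl
    intro k _
    by_cases h : c * (T % B) < B + (k : ℕ) * B ∧ B + (k : ℕ) * B ≤ T + c * (T % B)
    · rw [if_pos h, if_pos h]
      have hlt : (T + c * (T % B) - (B + (k : ℕ) * B)) % (T + 1)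
          = T + c * (T % B) - (B + (k : ℕ) * B) := Nat.mod_eq_of_lt (by omega)
      exact pad_eval T s τ _ (B + (k : ℕ) * B - c * (T % B)) (Nat.mod_lt _ (by omega))
        (by omega) _
    · rw [if_neg h, if_neg h]
  · apply Finset.sum_congr rfl
    intro l _
    have h1 := Nat.div_add_mod T B
    have h2 : ((l : ℕ) + 1) * B ≤ (T / B) * B := Nat.mul_le_mul_right _ l.isLt
    have h3 : ((l : ℕ) + 1) * B = (l : ℕ) * B + B := by ring
    have h4 : (T / B) * B = B * (T / B) := by ring
    exact pad_eval T s τ _ (B + T % B + (l : ℕ) * B) (by omega) (by omega) _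

theorem core (B T : ℕ) (hB : 1 ≤ B) (hBT : B ≤ T) (u : ℕ → Fin T → F) (j t : ℕ)
    (hjt : j ≤ t) (htB : t < j + B)
    (H : ∀ τ, τ ≤ t + T → (τ < j ∨ j + B ≤ τ) →
      chanStream (encCode B T hB hBT F) u τ = 0) :
    u t = 0 := by
  have hdm : B * (T / B) + T % B = T := Nat.div_add_mod T B
  have ha : 1 ≤ T / B := (Nat.one_le_div_iff (by omega)).mpr hBT
  have haB : B * 1 ≤ B * (T / B) := Nat.mul_le_mul_left _ ha
  have hBbT : B + T % B ≤ T := by omega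
  -- systematic extraction
  have Hs : ∀ τ, τ ≤ t + T → (τ < j ∨ j + B ≤ τ) → u τ = 0 := by
    intro τ h1 h2
    funext m
    have h3 := congrFun (H τ h1 h2) (Fin.castAdd B m)
    rw [chan_eq, enc_sys] at h3
    unfold Wp at h3
    simp only [Fin.val_last] at h3
    rw [if_pos (by omega)] at h3
    simpa [Nat.add_sub_cancel] using h3
  -- Phase 1 : special coordinates
  have P1 : ∀ ρ k, ρ < B → ∀ hk : k < T % B, ∀ hkT : k < T, u (j + ρ) ⟨k, hkT⟩ = 0 := by
    intro ρ k hρ hk hkT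
    have hb : 0 < T % B := by omega
    have hcs : (T % B) * ((k * B + ρ) / (T % B)) + (k * B + ρ) % (T % B) = k * B + ρ :=
      Nat.div_add_mod _ _
    set c := (k * B + ρ) / (T % B) with hcdef
    set qs := (k * B + ρ) % (T % B) with hqdef
    have hsb : qs < T % B := Nat.mod_lt _ hb
    have hkB : (k + 1) * B = k * B + B := by ring
    have hk1 : (k + 1) * B ≤ (T % B) * B := Nat.mul_le_mul_right _ (by omega)
    have hBb : B * (T % B) = (T % B) * B := by ring
    have hcc : c * (T % B) = (T % B) * c := by ring
    have hc : c < B := (Nat.div_lt_iff_lt_mul hb).mpr (by omega)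
    have hτle : j + B + qs ≤ t + T := by omega
    have h3 := congrFun (H (j + B + qs) hτle (Or.inr (by omega))) ⟨T + c, by omega⟩
    rw [chan_eq] at h3
    rw [parity B T hB hBT u (j + B + qs) c hc] at h3
    rw [Finset.sum_eq_single_of_mem (⟨k, hk⟩ : Fin (T % B)) (Finset.mem_univ _) ?h0,
      Finset.sum_eq_zero ?h1, add_zero] at h3
    case h0 =>
      intro b _ hbne
      have hbb : (b : ℕ) ≠ k := fun hh => hbne (Fin.ext hh)
      by_cases h1 : c * (T % B) < B + (b : ℕ) * B ∧ B + (b : ℕ) * B ≤ T + c * (T % B)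
      · rw [if_pos h1]
        by_cases h2 : B + (b : ℕ) * B - c * (T % B) ≤ j + B + qs
        · rw [if_pos h2]
          rcases Nat.lt_or_ge (b : ℕ) k with hlt | hge
          · have hmul : ((b : ℕ) + 1) * B ≤ k * B := Nat.mul_le_mul_right _ (by omega)
            have hbB : ((b : ℕ) + 1) * B = (b : ℕ) * B + B := by ring
            rw [Hs (j + B + qs - (B + (b : ℕ) * B - c * (T % B))) (by omega)
              (Or.inr (by omega))]
            rfl
          · have hmul : (k + 1) * B ≤ (b : ℕ) * B := Nat.mul_le_mul_right _ (by omega)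
            rw [Hs (j + B + qs - (B + (b : ℕ) * B - c * (T % B))) (by omega)
              (Or.inl (by omega))]
            rfl
        · rw [if_neg h2]
      · rw [if_neg h1]
    case h1 =>
      intro l _
      by_cases h2 : B + T % B + (l : ℕ) * B ≤ j + B + qs
      · rw [if_pos h2]
        rw [Hs (j + B + qs - (B + T % B + (l : ℕ) * B)) (by omega) (Or.inl (by omega))]
        rfl
      · rw [if_neg h2]
    simp only [Fin.val_mk] at h3
    rw [if_pos (show c * (T % B) < B + k * B ∧ B + k * B ≤ T + c * (T % B) by omega)] at h3
    rw [if_pos (show B + k * B - c * (T % B) ≤ j + B + qs by omega)] at h3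
    rw [show j + B + qs - (B + k * B - c * (T % B)) = j + ρ by omega] at h3
    exact h3
  -- Phase 2 : regular coordinates and conclusion
  funext m
  by_cases hm : (m : ℕ) < T % B
  · have := P1 (t - j) (m : ℕ) (by omega) hm m.isLt
    rw [show j + (t - j) = t by omega] at this
    simpa using this
  · have hb2 : (T / B) * ((( m : ℕ) - T % B) / (T / B)) + ((m : ℕ) - T % B) % (T / B)
        = (m : ℕ) - T % B := Nat.div_add_mod _ _
    set c := ((m : ℕ) - T % B) / (T / B) with hcdef
    set ql := ((m : ℕ) - T % B) % (T / B) with hqdef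
    have hql : ql < T / B := Nat.mod_lt _ (by omega)
    have hc : c < B := by
      apply (Nat.div_lt_iff_lt_mul (show 0 < T / B by omega)).mpr
      have : B * (T / B) = (T / B) * B := by ring
      have hmT := m.isLt
      omega
    have hcc : c * (T / B) = (T / B) * c := by ring
    have hql1 : (ql + 1) * B ≤ (T / B) * B := Nat.mul_le_mul_right _ (by omega)
    have hqlB : (ql + 1) * B = ql * B + B := by ring
    have hTB2 : (T / B) * B = B * (T / B) := by ring
    have heT : B + T % B + ql * B ≤ T := by omega
    have hτle : t + (B + T % B + ql * B) ≤ t + T := by omega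
    have h3 := congrFun (H (t + (B + T % B + ql * B)) hτle (Or.inr (by omega)))
      ⟨T + c, by omega⟩
    rw [chan_eq] at h3
    rw [parity B T hB hBT u (t + (B + T % B + ql * B)) c hc] at h3
    rw [Finset.sum_eq_zero ?h2, zero_add] at h3
    case h2 =>
      intro b _
      by_cases h1 : c * (T % B) < B + (b : ℕ) * B ∧ B + (b : ℕ) * B ≤ T + c * (T % B)
      · rw [if_pos h1]
        by_cases h2 : B + (b : ℕ) * B - c * (T % B) ≤ t + (B + T % B + ql * B)
        · rw [if_pos h2]
          set x := t + (B + T % B + ql * B) - (B + (b : ℕ) * B - c * (T % B)) with hxdef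
          by_cases hx : j ≤ x ∧ x < j + B
          · have := P1 (x - j) (b : ℕ) (by omega) b.isLt (by
              have h5 := b.isLt
              have h6 : T % B < B := Nat.mod_lt _ (by omega)
              omega)
            rw [show j + (x - j) = x by omega] at this
            rw [this]
          · rw [Hs x (by omega) (by omega)]
            rfl
        · rw [if_neg h2]
      · rw [if_neg h1]
    rw [Finset.sum_eq_single_of_mem (⟨ql, hql⟩ : Fin (T / B)) (Finset.mem_univ _) ?h3] at h3
    case h3 =>
      intro b _ hbne
      have hbb : (b : ℕ) ≠ ql := fun hh => hbne (Fin.ext hh)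
      by_cases h2 : B + T % B + (b : ℕ) * B ≤ t + (B + T % B + ql * B)
      · rw [if_pos h2]
        rcases Nat.lt_or_ge (b : ℕ) ql with hlt | hge
        · have hmul : ((b : ℕ) + 1) * B ≤ ql * B := Nat.mul_le_mul_right _ (by omega)
          have hbB : ((b : ℕ) + 1) * B = (b : ℕ) * B + B := by ring
          rw [Hs (t + (B + T % B + ql * B) - (B + T % B + (b : ℕ) * B)) (by omega)
            (Or.inr (by omega))]
          rfl
        · have hmul : (ql + 1) * B ≤ (b : ℕ) * B := Nat.mul_le_mul_right _ (by omega)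
          rw [Hs (t + (B + T % B + ql * B) - (B + T % B + (b : ℕ) * B)) (by omega)
            (Or.inl (by omega))]
          rfl
      · rw [if_neg h2]
    simp only [Fin.val_mk] at h3
    rw [if_pos (show B + T % B + ql * B ≤ t + (B + T % B + ql * B) by omega)] at h3
    rw [show t + (B + T % B + ql * B) - (B + T % B + ql * B) = t by omega] at h3
    have hcoord : (⟨T % B + c * (T / B) + ql, by
        have h2' : (c + 1) * (T / B) ≤ B * (T / B) := Nat.mul_le_mul_right _ (by omega)
        have h3' : c * (T / B) + T / B = (c + 1) * (T / B) := by ring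
        omega⟩ : Fin T) = m := Fin.ext (by simp only [Fin.val_mk]; omega)
    rw [hcoord] at h3
    simpa using h3

theorem uniq (B T : ℕ) (hB : 1 ≤ B) (hBT : B ≤ T) (s s' : ℕ → Fin T → F) (j j' t : ℕ)
    (h : ∀ i, i ≤ t + T → burstOut (encCode B T hB hBT F) B j s i
          = burstOut (encCode B T hB hBT F) B j' s' i) : s t = s' t := by
  have hiff : ∀ i, i ≤ t + T → ((j ≤ i ∧ i ≤ j + B - 1) ↔ (j' ≤ i ∧ i ≤ j' + B - 1)) := by
    intro i hi
    have hh := h i hi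
    unfold burstOut at hh
    constructor
    · intro hx
      by_contra hy
      rw [if_pos hx, if_neg hy] at hh
      cases hh
    · intro hx
      by_contra hy
      rw [if_neg hy, if_pos hx] at hh
      cases hh
  have hval : ∀ i, i ≤ t + T → ¬(j ≤ i ∧ i ≤ j + B - 1) →
      chanStream (encCode B T hB hBT F) s i = chanStream (encCode B T hB hBT F) s' i := by
    intro i hi hni
    have hh := h i hi
    unfold burstOut at hh
    rw [if_neg hni, if_neg (fun hx => hni ((hiff i hi).2 hx))] at hh
    exact Option.some.inj hh
  have hsys : ∀ (sx : ℕ → Fin T → F) (i : Fin T),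
      chanStream (encCode B T hB hBT F) sx t (Fin.castAdd B i) = sx t i := by
    intro sx i
    rw [chan_eq, enc_sys]
    unfold Wp
    simp only [Fin.val_last]
    rw [if_pos (by omega), Nat.add_sub_cancel]
  by_cases hE : j ≤ t ∧ t ≤ j + B - 1
  · have hjj : j = j' := by
      rcases Nat.lt_trichotomy j j' with h1 | h1 | h1
      · have := (hiff j (by omega)).1 ⟨le_refl j, by omega⟩
        omega
      · exact h1
      · have := (hiff j' (by omega)).2 ⟨le_refl j', by omega⟩
        omega
    subst hjj
    have hcore : (fun n => s n - s' n) t = 0 := by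
      apply core B T hB hBT _ j t hE.1 (by omega)
      intro τ h1 h2
      have hsub : chanStream (encCode B T hB hBT F) (fun n => s n - s' n) τ
          = chanStream (encCode B T hB hBT F) s τ
            - chanStream (encCode B T hB hBT F) s' τ := by
        rw [chan_eq, chan_eq, chan_eq]
        have hW : Wp T (fun n => s n - s' n) τ = Wp T s τ - Wp T s' τ := by
          funext d
          unfold Wp
          simp only [Pi.sub_apply]
          by_cases hd : T ≤ τ + (d : ℕ)
          · rw [if_pos hd, if_pos hd, if_pos hd]
          · rw [if_neg hd, if_neg hd, if_neg hd]
            simp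
        rw [hW]
        exact LinearMap.map_sub (IsLinearMap.mk' (enc B T hB hBT F) (enc_lin B T hB hBT)) _ _
      rw [hsub, hval τ h1 (by omega), sub_self]
    funext i
    have := congrFun hcore i
    simp only [Pi.sub_apply, Pi.zero_apply, sub_eq_zero] at this
    exact this
  · funext i
    have h5 := congrFun (hval t (by omega) hE) (Fin.castAdd B i)
    rw [hsys, hsys] at h5
    exact h5

theorem corrects (B T : ℕ) (hB : 1 ≤ B) (hBT : B ≤ T) :
    Corrects (encCode B T hB hBT F) B T := by
  classical
  refine ⟨fun t y =>
    if h : ∃ p : (ℕ → Fin T → F) × ℕ,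
        (fun i : Fin (t + T + 1) => burstOut (encCode B T hB hBT F) B p.2 p.1 i.val) = y
    then (Classical.choose h).1 t else 0, ?_⟩
  intro s j t
  have hex : ∃ p : (ℕ → Fin T → F) × ℕ,
      (fun i : Fin (t + T + 1) => burstOut (encCode B T hB hBT F) B p.2 p.1 i.val)
        = fun i : Fin (t + T + 1) => burstOut (encCode B T hB hBT F) B j s i.val :=
    ⟨(s, j), rfl⟩
  beta_reduce
  rw [dif_pos hex]
  have hspec := Classical.choose_spec hex
  apply uniq B T hB hBT _ s (Classical.choose hex).2 j t
  intro i hi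
  exact congrFun hspec ⟨i, by omega⟩

end SCoDev

/-- For `T ≥ B ≥ 1` there exist a finite field `F` and a systematic, time-invariant, linear,
memory-`T` streaming code with source alphabet `F^T` and channel alphabet `F^(T+B)` (rate
`T/(T+B)`) correcting erasure bursts of length `B` with delay `T`. -/
theorem stmt_7 (B T : ℕ) (hB : 1 ≤ B) (hBT : B ≤ T) :
    ∃ (F : Type) (instF : Field F) (_ : Fintype F)
      (g : (Fin (T + 1) → Fin T → F) → (Fin (T + B) → F)),
      @IsGoodSCoEncoder F instF B T g := by
  haveI : Fact (Nat.Prime 2) := ⟨Nat.prime_two⟩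
  exact ⟨ZMod 2, inferInstance, inferInstance, SCoDev.enc B T hB hBT (ZMod 2),
    SCoDev.enc_lin B T hB hBT, SCoDev.enc_sys B T hB hBT,
    SCoDev.corrects B T hB hBT⟩
end

section
/- Let F_q be a finite field, T ≥ B ≥ 1 integers, and H a (T−B)×B matrix over F_q such that the length-T systematic linear code generated by [I_{T−B} | H] corrects all cyclic erasure bursts of length B, i.e., every codeword of that code is uniquely determined by its coordinates outside any set of B cyclically consecutive positions of {0,…,T−1}. Consider the (T+B, T) low-delay burst erasure block code (LD-BEBC) mapping b = (u, n) ∈ F_q^B × F_q^{T−B} to the codeword c = (u, n, u + nH) ∈ F_q^{T+B}, with coordinates indexed 0,…,T+B−1 and information symbols b_j = c_j for 0 ≤ j ≤ T−1. Then for every erasure burst E = {e, e+1, …, e+B−1} ⊆ {0,…,T+B−1} of B consecutive coordinates and every information index j ∈ E with j ≤ T−1, the symbol b_j is uniquely determined by the unerased coordinates {c_m : m ∉ E, m ≤ min(j+T, T+B−1)}; in particular every erased symbol is recovered with delay at most T, with b_j for j ≤ B−1 recovered by coordinate j+T and all remaining symbols recovered by the end of the block. -/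
/-- The codeword of the systematic `(T, T-B)` code generated by `[I_{T-B} | H]`
corresponding to the information vector `nv`. -/
def cwSys {F : Type*} [Field F] {T B : ℕ} (hBT : B ≤ T)
    (H : Matrix (Fin (T - B)) (Fin B) F) (nv : Fin (T - B) → F) (m : Fin T) : F :=
  if h : m.val < T - B then nv ⟨m.val, h⟩
  else ∑ i, nv i * H i ⟨m.val - (T - B), by have := m.isLt; omega⟩

/-- The code generated by `[I_{T-B} | H]` corrects all cyclic erasure bursts of length `B`:
every codeword is uniquely determined by its coordinates outside any set of `B` cyclically
consecutive positions of `{0, …, T-1}`. -/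
def CorrectsCyclicBursts {F : Type*} [Field F] {T B : ℕ} (hBT : B ≤ T)
    (H : Matrix (Fin (T - B)) (Fin B) F) : Prop :=
  ∀ (nv nv' : Fin (T - B) → F) (j : ℕ),
    (∀ m : Fin T, (∀ l, l < B → m.val ≠ (j + l) % T) →
      cwSys hBT H nv m = cwSys hBT H nv' m) →
    ∀ m : Fin T, cwSys hBT H nv m = cwSys hBT H nv' m

/-- The `(T+B, T)` LD-BEBC codeword of the information vector `b = (u, n)`:
`c = (u, n, u + n·H)`, with `u` the first `B` and `n` the last `T-B` symbols of `b`. -/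
def ldbebc {F : Type*} [Field F] {T B : ℕ} (hBT : B ≤ T)
    (H : Matrix (Fin (T - B)) (Fin B) F) (b : Fin T → F) (m : Fin (T + B)) : F :=
  if h : m.val < T then b ⟨m.val, h⟩
  else b ⟨m.val - T, by have := m.isLt; omega⟩ +
    ∑ i : Fin (T - B), b ⟨B + i.val, by have := i.isLt; omega⟩ *
      H i ⟨m.val - T, by have := m.isLt; omega⟩

section Helpers

variable {F : Type*} [Field F] {T B : ℕ} (hBT : B ≤ T)
  (H : Matrix (Fin (T - B)) (Fin B) F)

lemma cwSys_info (nv : Fin (T - B) → F) (m : ℕ) (hm : m < T - B) :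
    cwSys hBT H nv ⟨m, by omega⟩ = nv ⟨m, hm⟩ := by
  simp [cwSys, hm]

lemma cwSys_parity (nv : Fin (T - B) → F) (k : ℕ) (hk : k < B) :
    cwSys hBT H nv ⟨T - B + k, by omega⟩ = ∑ i, nv i * H i ⟨k, hk⟩ := by
  simp only [cwSys]
  rw [dif_neg (show ¬ ((⟨T - B + k, by omega⟩ : Fin T).val < T - B) by simp)]
  simp [Nat.add_sub_cancel_left]

lemma ldbebc_info (b : Fin T → F) (m : ℕ) (hm : m < T) :
    ldbebc hBT H b ⟨m, by omega⟩ = b ⟨m, hm⟩ := by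
  simp [ldbebc, hm]

lemma ldbebc_parity (b : Fin T → F) (k : ℕ) (hk : k < B) :
    ldbebc hBT H b ⟨T + k, by omega⟩ =
      b ⟨k, by omega⟩ + ∑ i : Fin (T - B),
        b ⟨B + i.val, by have := i.isLt; omega⟩ * H i ⟨k, hk⟩ := by
  simp only [ldbebc]
  rw [dif_neg (show ¬ ((⟨T + k, by omega⟩ : Fin (T + B)).val < T) by simp)]
  simp [Nat.add_sub_cancel_left]

end Helpers

/-- LD-BEBC delay property: for every erasure burst `E = {e, …, e+B-1}` of `B` consecutive
coordinates of the `(T+B, T)` LD-BEBC and every information index `j ∈ E` with `j ≤ T-1`,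
the symbol `b_j` is uniquely determined by the unerased coordinates
`{c_m : m ∉ E, m ≤ min (j+T) (T+B-1)}`, i.e. it is recovered with delay at most `T`. -/
theorem stmt_8 {F : Type*} [Field F] [Fintype F] (T B : ℕ) (hB : 1 ≤ B) (hBT : B ≤ T)
    (H : Matrix (Fin (T - B)) (Fin B) F) (hH : CorrectsCyclicBursts hBT H)
    (b b' : Fin T → F) (e : ℕ) (he : e + B ≤ T + B)
    (j : ℕ) (hej : e ≤ j) (hje : j < e + B) (hj : j < T)
    (hobs : ∀ m : Fin (T + B), (m.val < e ∨ e + B ≤ m.val) →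
      m.val ≤ min (j + T) (T + B - 1) → ldbebc hBT H b m = ldbebc hBT H b' m) :
    b ⟨j, hj⟩ = b' ⟨j, hj⟩ := by
  have heT : e < T := by omega
  set nv : Fin (T - B) → F := fun i => b ⟨B + i.val, by have := i.isLt; omega⟩ with hnv
  set nv' : Fin (T - B) → F := fun i => b' ⟨B + i.val, by have := i.isLt; omega⟩ with hnv'
  have key : ∀ m : Fin T, cwSys hBT H nv m = cwSys hBT H nv' m := by
    refine hH nv nv' (e + T - B) ?_
    intro m hm
    obtain ⟨mv, hmv⟩ := m
    by_cases hmc : mv < T - B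
    · -- information position of the systematic code
      have hE : B + mv < e ∨ e + B ≤ B + mv := by
        rcases Nat.lt_or_ge (B + mv) e with h | h
        · exact Or.inl h
        rcases Nat.lt_or_ge (B + mv) (e + B) with h2 | h2
        · exfalso
          refine hm (B + mv - e) (by omega) ?_
          show mv = (e + T - B + (B + mv - e)) % T
          have h1 : e + T - B + (B + mv - e) = T + mv := by omega
          rw [h1, Nat.add_mod_left, Nat.mod_eq_of_lt hmv]
        · exact Or.inr h2
      have hob := hobs ⟨B + mv, by omega⟩ hE (show B + mv ≤ min (j + T) (T + B - 1) by omega)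
      rw [ldbebc_info hBT H b (B + mv) (by omega),
        ldbebc_info hBT H b' (B + mv) (by omega)] at hob
      rw [cwSys_info hBT H nv mv hmc, cwSys_info hBT H nv' mv hmc]
      exact hob
    · -- parity position of the systematic code
      obtain ⟨k, hmk, hkB⟩ : ∃ k, mv = T - B + k ∧ k < B :=
        ⟨mv - (T - B), by omega, by omega⟩
      subst hmk
      have hka : e + B ≤ T + k := by
        by_contra hcon
        push_neg at hcon
        refine hm (T + k - e) (by omega) ?_
        show T - B + k = (e + T - B + (T + k - e)) % T
        have h1 : e + T - B + (T + k - e) = T + (T - B + k) := by omega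
        rw [h1, Nat.add_mod_left, Nat.mod_eq_of_lt hmv]
      have hke : k < e := by
        by_contra hcon
        push_neg at hcon
        refine hm (k - e) (by omega) ?_
        show T - B + k = (e + T - B + (k - e)) % T
        have h1 : e + T - B + (k - e) = T - B + k := by omega
        rw [h1, Nat.mod_eq_of_lt hmv]
      have hob1 := hobs ⟨T + k, by omega⟩ (Or.inr (show e + B ≤ T + k by omega)) (show T + k ≤ min (j + T) (T + B - 1) by omega)
      have hob2 := hobs ⟨k, by omega⟩ (Or.inl (show k < e by omega)) (show k ≤ min (j + T) (T + B - 1) by omega)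
      rw [ldbebc_parity hBT H b k hkB, ldbebc_parity hBT H b' k hkB] at hob1
      rw [ldbebc_info hBT H b k (by omega), ldbebc_info hBT H b' k (by omega)] at hob2
      rw [cwSys_parity hBT H nv k hkB, cwSys_parity hBT H nv' k hkB]
      rw [hob2] at hob1
      simp only [hnv, hnv']
      exact add_left_cancel hob1
  rcases Nat.lt_or_ge j B with hjB | hjB
  · have hob1 := hobs ⟨T + j, by omega⟩ (Or.inr (show e + B ≤ T + j by omega)) (show T + j ≤ min (j + T) (T + B - 1) by omega)
    rw [ldbebc_parity hBT H b j hjB, ldbebc_parity hBT H b' j hjB] at hob1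
    have hp := key ⟨T - B + j, by omega⟩
    rw [cwSys_parity hBT H nv j hjB, cwSys_parity hBT H nv' j hjB] at hp
    simp only [hnv, hnv'] at hp
    rw [hp] at hob1
    exact add_right_cancel hob1
  · have hi := key ⟨j - B, by omega⟩
    rw [cwSys_info hBT H nv (j - B) (by omega), cwSys_info hBT H nv' (j - B) (by omega)] at hi
    simp only [hnv, hnv'] at hi
    rw [show (⟨j, hj⟩ : Fin T) = ⟨B + (j - B), by omega⟩ from
      Fin.ext (show j = B + (j - B) by omega)]
    exact hi
end

section
/- Let S and X be nonempty sets and B, T ≥ 1 integers. If there exists a streaming code with source alphabet S and channel alphabet X that corrects erasure bursts of length B with delay T, then for every integer α ≥ 1 there exists a streaming code with source alphabet S and channel alphabet X that corrects erasure bursts of length αB with delay αT (obtained by vertical interleaving of step α). -/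
/-- The vertically interleaved encoder of step `α`. -/
def interleaveEnc {S X : Type*} (f : ∀ t : ℕ, (Fin (t + 1) → S) → X) (α : ℕ)
    (t : ℕ) (v : Fin (t + 1) → S) : X :=
  f (t / α) fun i => v ⟨α * i.val + t % α, by
    have h1 : α * i.val ≤ α * (t / α) := Nat.mul_le_mul_left α (Nat.lt_succ_iff.mp i.isLt)
    have h2 := Nat.div_add_mod t α
    omega⟩

lemma chan_interleave {S X : Type*} (f : ∀ t : ℕ, (Fin (t + 1) → S) → X) (α : ℕ)
    (s : ℕ → S) (n : ℕ) :
    chanStream (interleaveEnc f α) s n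
      = chanStream f (fun k => s (α * k + n % α)) (n / α) := rfl

/-- Vertical interleaving: if some streaming code with source alphabet `S` and channel
alphabet `X` corrects bursts of length `B` with delay `T`, then for every `α ≥ 1` some
streaming code with the same alphabets corrects bursts of length `α*B` with delay `α*T`. -/
theorem stmt_10 {S X : Type*} [Nonempty S] [Nonempty X] (B T : ℕ) (hB : 1 ≤ B) (hT : 1 ≤ T)
    (h : ∃ f : ∀ t : ℕ, (Fin (t + 1) → S) → X, Corrects f B T) :
    ∀ α : ℕ, 1 ≤ α →
      ∃ f' : ∀ t : ℕ, (Fin (t + 1) → S) → X, Corrects f' (α * B) (α * T) := by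
  classical
  intro α hα
  obtain ⟨f, γ, hγ⟩ := h
  refine ⟨interleaveEnc f α, ?_⟩
  -- the decoder for the interleaved code
  refine ⟨fun t y =>
    let jdet := Nat.find (⟨t + α * T + 1, Or.inl le_rfl⟩ :
      ∃ n, t + α * T + 1 ≤ n ∨ ∃ h : n < t + α * T + 1, (y ⟨n, h⟩).isNone = true)
    let k0 := (jdet - t % α + (α - 1)) / α
    γ (t / α) (fun i =>
      if k0 ≤ i.val ∧ i.val ≤ k0 + B - 1 then none
      else y ⟨α * i.val + t % α, by
        have h1 : α * i.val ≤ α * (t / α + T) :=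
          Nat.mul_le_mul_left α (Nat.lt_succ_iff.mp i.isLt)
        rw [Nat.mul_add] at h1
        have h2 := Nat.div_add_mod t α
        omega⟩), ?_⟩
  intro s j t
  simp only
  set r := t % α with hr
  set q := t / α with hq
  have hqr : α * q + r = t := Nat.div_add_mod t α
  have hrα : r < α := Nat.mod_lt t hα
  set y : Fin (t + α * T + 1) → Option X :=
    fun i => burstOut (interleaveEnc f α) (α * B) j s i.val with hy
  -- the detected burst start
  set jdet := Nat.find (⟨t + α * T + 1, Or.inl le_rfl⟩ :
      ∃ n, t + α * T + 1 ≤ n ∨ ∃ h : n < t + α * T + 1, (y ⟨n, h⟩).isNone = true) with hjdet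
  have hynone : ∀ n (h : n < t + α * T + 1),
      (y ⟨n, h⟩).isNone = true ↔ (j ≤ n ∧ n ≤ j + α * B - 1) := by
    intro n h
    simp only [hy, burstOut]
    split_ifs with hc <;> simp [hc]
  -- characterize jdet
  have hBpos : 1 ≤ α * B := Nat.one_le_iff_ne_zero.mpr (by positivity)
  have hjdet_spec : (j ≤ t + α * T ∧ jdet = j) ∨ (t + α * T < j ∧ jdet = t + α * T + 1) := by
    rcases le_or_gt j (t + α * T) with hj | hj
    · left
      refine ⟨hj, le_antisymm ?_ ?_⟩
      · exact Nat.find_le (Or.inr ⟨by omega, (hynone j (by omega)).mpr ⟨le_rfl, by omega⟩⟩)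
      · by_contra hlt
        push_neg at hlt
        have := Nat.find_spec (⟨t + α * T + 1, Or.inl le_rfl⟩ :
          ∃ n, t + α * T + 1 ≤ n ∨ ∃ h : n < t + α * T + 1, (y ⟨n, h⟩).isNone = true)
        rw [← hjdet] at this
        rcases this with h1 | ⟨h1, h2⟩
        · omega
        · have := (hynone jdet h1).mp h2
          omega
    · right
      refine ⟨hj, le_antisymm (Nat.find_le (Or.inl le_rfl)) ?_⟩
      by_contra hlt
      push_neg at hlt
      have := Nat.find_spec (⟨t + α * T + 1, Or.inl le_rfl⟩ :
        ∃ n, t + α * T + 1 ≤ n ∨ ∃ h : n < t + α * T + 1, (y ⟨n, h⟩).isNone = true)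
      rw [← hjdet] at this
      rcases this with h1 | ⟨h1, h2⟩
      · omega
      · have := (hynone jdet h1).mp h2
        omega
  set k0 := (jdet - r + (α - 1)) / α with hk0
  -- ceiling division facts
  have hk0le : α * k0 ≤ (jdet - r) + (α - 1) := by
    rw [hk0]; exact Nat.mul_div_le _ _ |>.trans_eq (by ring_nf) |>.trans le_rfl
  have hk0ge : jdet - r ≤ α * k0 := by
    rw [hk0]
    have hmod := Nat.div_add_mod (jdet - r + (α - 1)) α
    have := Nat.mod_lt (jdet - r + (α - 1)) hα
    omega
  -- the interleaved substream at residue r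
  set sr : ℕ → S := fun k => s (α * k + r) with hsr
  have key := hγ sr k0 q
  have hst : sr q = s t := by rw [hsr]; simp [hqr]
  rw [← hst, ← key]
  congr 1
  funext i
  have hiq : i.val ≤ q + T := Nat.lt_succ_iff.mp i.isLt
  have hile : α * i.val + r ≤ t + α * T := by
    have h1 : α * i.val ≤ α * (q + T) := Nat.mul_le_mul_left α hiq
    rw [Nat.mul_add] at h1
    omega
  by_cases hcase : k0 ≤ i.val ∧ i.val ≤ k0 + B - 1
  · rw [if_pos hcase, burstOut, if_pos hcase]
  · rw [if_neg hcase]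
    -- the corresponding big-stream position is not erased
    have hnotburst : ¬ (j ≤ α * i.val + r ∧ α * i.val + r ≤ j + α * B - 1) := by
      rintro ⟨h1, h2⟩
      have hjle : j ≤ t + α * T := le_trans h1 hile
      have hjd : jdet = j := by rcases hjdet_spec with ⟨_, e⟩ | ⟨c, _⟩; exact e; omega
      -- show k0 ≤ i and i ≤ k0 + B - 1, contradicting hcase
      apply hcase
      constructor
      · by_contra hik
        push_neg at hik
        have : α * i.val + α ≤ α * k0 := by
          have : α * (i.val + 1) ≤ α * k0 := Nat.mul_le_mul_left α hik
          rwa [Nat.mul_add, Nat.mul_one] at this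
        omega
      · have h3 : α * i.val ≤ α * k0 + α * B - 1 := by omega
        have h4 : α * i.val < α * (k0 + B) := by rw [Nat.mul_add]; omega
        have := Nat.lt_of_mul_lt_mul_left h4
        omega
    simp only [hy, burstOut, if_neg hnotburst, if_neg hcase]
    congr 1
    rw [chan_interleave]
    have hdiv : (α * i.val + r) / α = i.val := by
      rw [Nat.mul_add_div (by omega), Nat.div_eq_of_lt hrα]; omega
    have hmod : (α * i.val + r) % α = r := by
      rw [Nat.mul_add_mod, Nat.mod_eq_of_lt hrα]
    rw [hdiv, hmod]
end

section
/- Let F be any field. Define the streaming code (DE-SCo) with source alphabet F^2, writing s[t] = (s_0[t], s_1[t]), and channel alphabet F^3, by x[t] = (s_0[t], s_1[t], q[t]) where q[t] = s_0[t−2] + s_1[t−1] + s_1[t−5] + s_0[t−4], and source sub-symbols with negative time index are taken to be 0. This rate-2/3 code corrects every erasure burst of length 1 with delay 2, and also corrects every erasure burst of length 2 with delay 5. -/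
/-- The DE-SCo encoder: `x[t] = (s₀[t], s₁[t], q[t])` with
`q[t] = s₀[t-2] + s₁[t-1] + s₁[t-5] + s₀[t-4]`, source sub-symbols at negative times being `0`. -/
def encDE (F : Type*) [Field F] (t : ℕ) (hist : Fin (t + 1) → Fin 2 → F) : Fin 3 → F :=
  let sv : ℕ → Fin 2 → F := fun d i => if h : d ≤ t then hist ⟨t - d, by omega⟩ i else 0
  ![sv 0 0, sv 0 1, sv 2 0 + sv 1 1 + sv 5 1 + sv 4 0]

/-- The parity symbol. -/
def Q (F : Type*) [Field F] (s : ℕ → Fin 2 → F) (u : ℕ) : F :=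
  (if 2 ≤ u then s (u - 2) 0 else 0) + (if 1 ≤ u then s (u - 1) 1 else 0) +
    (if 5 ≤ u then s (u - 5) 1 else 0) + (if 4 ≤ u then s (u - 4) 0 else 0)

lemma chan_apply (F : Type*) [Field F] (s : ℕ → Fin 2 → F) (u : ℕ) :
    chanStream (encDE F) s u = ![s u 0, s u 1, Q F s u] := by
  funext k
  fin_cases k <;> simp [chanStream, encDE, Q, dite_eq_ite]

lemma termEq {F : Type*} [Field F] (s s' : ℕ → Fin 2 → F) (d u : ℕ) (i : Fin 2)
    (h : d ≤ u → s (u - d) i = s' (u - d) i) :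
    (if d ≤ u then s (u - d) i else 0) = (if d ≤ u then s' (u - d) i else 0) := by
  split_ifs with hd
  · exact h hd
  · rfl

lemma extractEq {F : Type*} [Field F] {s s' : ℕ → Fin 2 → F} {d u : ℕ} {i : Fin 2}
    (hd : d ≤ u)
    (h : (if d ≤ u then s (u - d) i else 0) = (if d ≤ u then s' (u - d) i else 0)) :
    s (u - d) i = s' (u - d) i := by
  rwa [if_pos hd, if_pos hd] at h

lemma slot2 {F : Type*} [Field F] {s s' : ℕ → Fin 2 → F} {u : ℕ} (hu : 2 ≤ u)
    (hq : Q F s u = Q F s' u)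
    (h1 : 1 ≤ u → s (u - 1) 1 = s' (u - 1) 1)
    (h5 : 5 ≤ u → s (u - 5) 1 = s' (u - 5) 1)
    (h4 : 4 ≤ u → s (u - 4) 0 = s' (u - 4) 0) :
    s (u - 2) 0 = s' (u - 2) 0 := by
  refine extractEq hu ?_
  unfold Q at hq
  linear_combination hq - termEq s s' 1 u 1 h1 - termEq s s' 5 u 1 h5 - termEq s s' 4 u 0 h4

lemma slot1 {F : Type*} [Field F] {s s' : ℕ → Fin 2 → F} {u : ℕ} (hu : 1 ≤ u)
    (hq : Q F s u = Q F s' u)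
    (h2 : 2 ≤ u → s (u - 2) 0 = s' (u - 2) 0)
    (h5 : 5 ≤ u → s (u - 5) 1 = s' (u - 5) 1)
    (h4 : 4 ≤ u → s (u - 4) 0 = s' (u - 4) 0) :
    s (u - 1) 1 = s' (u - 1) 1 := by
  refine extractEq hu ?_
  unfold Q at hq
  linear_combination hq - termEq s s' 2 u 0 h2 - termEq s s' 5 u 1 h5 - termEq s s' 4 u 0 h4

lemma slot5 {F : Type*} [Field F] {s s' : ℕ → Fin 2 → F} {u : ℕ} (hu : 5 ≤ u)
    (hq : Q F s u = Q F s' u)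
    (h2 : 2 ≤ u → s (u - 2) 0 = s' (u - 2) 0)
    (h1 : 1 ≤ u → s (u - 1) 1 = s' (u - 1) 1)
    (h4 : 4 ≤ u → s (u - 4) 0 = s' (u - 4) 0) :
    s (u - 5) 1 = s' (u - 5) 1 := by
  refine extractEq hu ?_
  unfold Q at hq
  linear_combination hq - termEq s s' 2 u 0 h2 - termEq s s' 1 u 1 h1 - termEq s s' 4 u 0 h4

lemma slot4 {F : Type*} [Field F] {s s' : ℕ → Fin 2 → F} {u : ℕ} (hu : 4 ≤ u)
    (hq : Q F s u = Q F s' u)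
    (h2 : 2 ≤ u → s (u - 2) 0 = s' (u - 2) 0)
    (h1 : 1 ≤ u → s (u - 1) 1 = s' (u - 1) 1)
    (h5 : 5 ≤ u → s (u - 5) 1 = s' (u - 5) 1) :
    s (u - 4) 0 = s' (u - 4) 0 := by
  refine extractEq hu ?_
  unfold Q at hq
  linear_combination hq - termEq s s' 2 u 0 h2 - termEq s s' 1 u 1 h1 - termEq s s' 5 u 1 h5

lemma burst_analyze {F : Type*} [Field F] {B j j' u : ℕ} {s s' : ℕ → Fin 2 → F}
    (h : burstOut (encDE F) B j s u = burstOut (encDE F) B j' s' u) :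
    ¬(j ≤ u ∧ u ≤ j + B - 1) →
      s u 0 = s' u 0 ∧ s u 1 = s' u 1 ∧ Q F s u = Q F s' u := by
  intro h1
  unfold burstOut at h
  rw [if_neg h1] at h
  by_cases h2 : j' ≤ u ∧ u ≤ j' + B - 1
  · rw [if_pos h2] at h
    exact absurd h (by simp)
  · rw [if_neg h2] at h
    have hc := Option.some_injective _ h
    rw [chan_apply, chan_apply] at hc
    refine ⟨?_, ?_, ?_⟩
    · simpa using congrFun hc 0
    · simpa using congrFun hc 1
    · simpa [Q] using congrFun hc 2

open Classical in
noncomputable def decDE (F : Type*) [Field F] (B T : ℕ) (t : ℕ)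
    (y : Fin (t + T + 1) → Option (Fin 3 → F)) : Fin 2 → F :=
  if h : ∃ p : (ℕ → Fin 2 → F) × ℕ,
      (fun i : Fin (t + T + 1) => burstOut (encDE F) B p.2 p.1 i.val) = y
  then h.choose.1 t else fun _ => 0

lemma correct_of_key {F : Type*} [Field F] (B T : ℕ)
    (key : ∀ (s s' : ℕ → Fin 2 → F) (j j' t : ℕ),
      (∀ u, u ≤ t + T → burstOut (encDE F) B j s u = burstOut (encDE F) B j' s' u) →
      s t = s' t) :
    Corrects (encDE F) B T := by
  classical
  refine ⟨decDE F B T, ?_⟩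
  intro s j t
  have hx : ∃ p : (ℕ → Fin 2 → F) × ℕ,
      (fun i : Fin (t + T + 1) => burstOut (encDE F) B p.2 p.1 i.val)
        = fun i : Fin (t + T + 1) => burstOut (encDE F) B j s i.val := ⟨(s, j), rfl⟩
  show decDE F B T t _ = s t
  rw [decDE, dif_pos hx]
  exact key hx.choose.1 s hx.choose.2 j t fun u hu =>
    congrFun hx.choose_spec ⟨u, by omega⟩

lemma key12 (F : Type*) [Field F] (s s' : ℕ → Fin 2 → F) (j j' t : ℕ)
    (h : ∀ u, u ≤ t + 2 → burstOut (encDE F) 1 j s u = burstOut (encDE F) 1 j' s' u) :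
    s t = s' t := by
  have H := fun u (hu : u ≤ t + 2) => burst_analyze (h u hu)
  by_cases ht : j ≤ t ∧ t ≤ j + 1 - 1
  case neg =>
    obtain ⟨h0, h1, _⟩ := H t (by omega) ht
    funext i; fin_cases i
    · exact h0
    · exact h1
  case pos =>
    have k0 : ∀ u, u ≤ t + 2 → u ≠ t → s u 0 = s' u 0 :=
      fun u a b => (H u a (by omega)).1
    have k1 : ∀ u, u ≤ t + 2 → u ≠ t → s u 1 = s' u 1 :=
      fun u a b => (H u a (by omega)).2.1
    have kq : ∀ u, u ≤ t + 2 → u ≠ t → Q F s u = Q F s' u :=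
      fun u a b => (H u a (by omega)).2.2
    have a0 : s (t + 2 - 2) 0 = s' (t + 2 - 2) 0 :=
      slot2 (by omega) (kq (t + 2) (by omega) (by omega))
        (fun _ => k1 (t + 2 - 1) (by omega) (by omega))
        (fun h5 => k1 (t + 2 - 5) (by omega) (by omega))
        (fun h4 => k0 (t + 2 - 4) (by omega) (by omega))
    have a1 : s (t + 1 - 1) 1 = s' (t + 1 - 1) 1 :=
      slot1 (by omega) (kq (t + 1) (by omega) (by omega))
        (fun h2 => k0 (t + 1 - 2) (by omega) (by omega))
        (fun h5 => k1 (t + 1 - 5) (by omega) (by omega))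
        (fun h4 => k0 (t + 1 - 4) (by omega) (by omega))
    simp only [Nat.add_sub_cancel] at a0 a1
    funext i; fin_cases i
    · exact a0
    · exact a1

lemma key25 (F : Type*) [Field F] (s s' : ℕ → Fin 2 → F) (j j' t : ℕ)
    (h : ∀ u, u ≤ t + 5 → burstOut (encDE F) 2 j s u = burstOut (encDE F) 2 j' s' u) :
    s t = s' t := by
  have H := fun u (hu : u ≤ t + 5) => burst_analyze (h u hu)
  by_cases ht : j ≤ t ∧ t ≤ j + 2 - 1
  case neg =>
    obtain ⟨h0, h1, _⟩ := H t (by omega) ht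
    funext i; fin_cases i
    · exact h0
    · exact h1
  case pos =>
    have k0 : ∀ u, u ≤ t + 5 → ¬(j ≤ u ∧ u ≤ j + 1) → s u 0 = s' u 0 :=
      fun u a b => (H u a (by omega)).1
    have k1 : ∀ u, u ≤ t + 5 → ¬(j ≤ u ∧ u ≤ j + 1) → s u 1 = s' u 1 :=
      fun u a b => (H u a (by omega)).2.1
    have kq : ∀ u, u ≤ t + 5 → ¬(j ≤ u ∧ u ≤ j + 1) → Q F s u = Q F s' u :=
      fun u a b => (H u a (by omega)).2.2
    have hcase : t = j ∨ t = j + 1 := by omega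
    rcases hcase with htj | htj
    · -- t = j : erased set is {t, t+1}
      have a1 : s (t + 3 - 2) 0 = s' (t + 3 - 2) 0 :=
        slot2 (by omega) (kq (t + 3) (by omega) (by omega))
          (fun _ => k1 (t + 3 - 1) (by omega) (by omega))
          (fun h5 => k1 (t + 3 - 5) (by omega) (by omega))
          (fun h4 => k0 (t + 3 - 4) (by omega) (by omega))
      have a0 : s (t + 4 - 4) 0 = s' (t + 4 - 4) 0 :=
        slot4 (by omega) (kq (t + 4) (by omega) (by omega))
          (fun _ => k0 (t + 4 - 2) (by omega) (by omega))
          (fun _ => k1 (t + 4 - 1) (by omega) (by omega))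
          (fun h5 => k1 (t + 4 - 5) (by omega) (by omega))
      have b1 : s (t + 5 - 5) 1 = s' (t + 5 - 5) 1 :=
        slot5 (by omega) (kq (t + 5) (by omega) (by omega))
          (fun _ => k0 (t + 5 - 2) (by omega) (by omega))
          (fun _ => k1 (t + 5 - 1) (by omega) (by omega))
          (fun _ => by rw [show t + 5 - 4 = t + 3 - 2 by omega]; exact a1)
      simp only [Nat.add_sub_cancel] at a0 b1
      funext i; fin_cases i
      · exact a0
      · exact b1
    · -- t = j + 1 : erased set is {j, j+1}
      have a1 : s (j + 3 - 2) 0 = s' (j + 3 - 2) 0 :=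
        slot2 (by omega) (kq (j + 3) (by omega) (by omega))
          (fun _ => k1 (j + 3 - 1) (by omega) (by omega))
          (fun h5 => k1 (j + 3 - 5) (by omega) (by omega))
          (fun h4 => k0 (j + 3 - 4) (by omega) (by omega))
      have a0 : s (j + 4 - 4) 0 = s' (j + 4 - 4) 0 :=
        slot4 (by omega) (kq (j + 4) (by omega) (by omega))
          (fun _ => k0 (j + 4 - 2) (by omega) (by omega))
          (fun _ => k1 (j + 4 - 1) (by omega) (by omega))
          (fun h5 => k1 (j + 4 - 5) (by omega) (by omega))
      have b1 : s (j + 2 - 1) 1 = s' (j + 2 - 1) 1 :=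
        slot1 (by omega) (kq (j + 2) (by omega) (by omega))
          (fun _ => by rw [show j + 2 - 2 = j + 4 - 4 by omega]; exact a0)
          (fun h5 => k1 (j + 2 - 5) (by omega) (by omega))
          (fun h4 => k0 (j + 2 - 4) (by omega) (by omega))
      have a1' : s t 0 = s' t 0 := by
        rw [show t = j + 3 - 2 by omega]; exact a1
      have b1' : s t 1 = s' t 1 := by
        rw [show t = j + 2 - 1 by omega]; exact b1
      funext i; fin_cases i
      · exact a1'
      · exact b1'

/-- Over any field, the rate-`2/3` DE-SCo code corrects every erasure burst of length `1`
with delay `2`, and every erasure burst of length `2` with delay `5`. -/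
theorem stmt_13 (F : Type*) [Field F] :
    Corrects (encDE F) 1 2 ∧ Corrects (encDE F) 2 5 := by
  exact ⟨correct_of_key 1 2 (key12 F), correct_of_key 2 5 (key25 F)⟩
end

section
/- Let S and X be nonempty sets and let n ≥ 1, B₁, B₂, D₁, D₂ ≥ 1 be integers. If there exists a streaming code with source alphabet S and channel alphabet X that corrects erasure bursts of length n·B₁ with delay D₁ and also corrects erasure bursts of length n·B₂ with delay D₂, then there exists a streaming code with source alphabet S^n and channel alphabet X^n (the same rate) that corrects erasure bursts of length B₁ with delay ⌈D₁/n⌉ and also corrects erasure bursts of length B₂ with delay ⌈D₂/n⌉ (obtained by splitting each source symbol of S^n into n consecutive symbols of S and grouping n consecutive channel symbols). -/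
/-- Flatten a stream of `n`-blocks into a plain stream. -/
def flatten {S : Type*} {n : ℕ} (hn : 0 < n) (s' : ℕ → Fin n → S) (m : ℕ) : S :=
  s' (m / n) ⟨m % n, Nat.mod_lt _ hn⟩

/-- The expanded encoder: group `n` consecutive `f`-channel symbols. -/
def expandEnc {S X : Type*} (n : ℕ) (hn : 0 < n) (f : ∀ t : ℕ, (Fin (t + 1) → S) → X)
    (t : ℕ) (w : Fin (t + 1) → (Fin n → S)) (k : Fin n) : X :=
  f (n * t + k.val) (fun i =>
    w ⟨i.val / n, by
        have h1 : i.val ≤ n * t + k.val := Nat.lt_succ_iff.mp i.isLt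
        have h2 : i.val / n ≤ (n * t + k.val) / n := Nat.div_le_div_right h1
        have h3 : (n * t + k.val) / n = t + k.val / n := Nat.mul_add_div hn _ _
        have h4 : k.val / n = 0 := Nat.div_eq_of_lt k.isLt
        omega⟩
      ⟨i.val % n, Nat.mod_lt _ hn⟩)

lemma chanStream_expand {S X : Type*} {n : ℕ} (hn : 0 < n)
    (f : ∀ t : ℕ, (Fin (t + 1) → S) → X) (s' : ℕ → Fin n → S) (t : ℕ) (k : Fin n) :
    chanStream (expandEnc n hn f) s' t k = chanStream f (flatten hn s') (n * t + k.val) := rfl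

lemma cond_iff {n B j m : ℕ} (hn : 0 < n) (hB : 1 ≤ B) :
    (j ≤ m / n ∧ m / n ≤ j + B - 1) ↔ (n * j ≤ m ∧ m ≤ n * j + n * B - 1) := by
  have h1 : j ≤ m / n ↔ j * n ≤ m := Nat.le_div_iff_mul_le hn
  have h2 : m / n < j + B ↔ m < (j + B) * n := Nat.div_lt_iff_lt_mul hn
  have h3 : 1 ≤ n * B := Nat.one_le_iff_ne_zero.mpr (by positivity)
  have he : (j + B) * n = n * j + n * B := by ring
  have he2 : j * n = n * j := by ring
  constructor
  · rintro ⟨ha, hb⟩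
    have h4 := h1.mp ha
    have h5 : m / n < j + B := by omega
    have h6 := h2.mp h5
    omega
  · rintro ⟨ha, hb⟩
    have h5 : m < (j + B) * n := by omega
    have h6 := h2.mpr h5
    exact ⟨h1.mpr (by omega), by omega⟩

lemma expand_corrects {S X : Type*} {n B D T' : ℕ} (hn : 0 < n) (hB : 1 ≤ B)
    (hle : D ≤ n * T') (f : ∀ t : ℕ, (Fin (t + 1) → S) → X)
    (h : Corrects f (n * B) D) : Corrects (expandEnc n hn f) B T' := by
  obtain ⟨γ, hγ⟩ := h
  refine ⟨fun t y' k => γ (n * t + k.val) (fun i =>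
    (y' ⟨i.val / n, by
        have h1 : i.val ≤ n * t + k.val + D := Nat.lt_succ_iff.mp i.isLt
        have h2 : i.val < n * (t + T' + 1) := by
          have := k.isLt; nlinarith
        exact (Nat.div_lt_iff_lt_mul hn).mpr (by nlinarith)⟩).map
      (fun g => g ⟨i.val % n, Nat.mod_lt _ hn⟩)), ?_⟩
  intro s' j t
  funext k
  have key := hγ (flatten hn s') (n * j) (n * t + k.val)
  have hd : (n * t + k.val) / n = t := by
    rw [Nat.mul_add_div hn, Nat.div_eq_of_lt k.isLt, Nat.add_zero]
  have hm : (n * t + k.val) % n = k.val := by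
    rw [Nat.mul_add_mod, Nat.mod_eq_of_lt k.isLt]
  have hflat : flatten hn s' (n * t + k.val) = s' t k := by
    unfold flatten
    rw [hd]
    exact congrArg (s' t) (Fin.ext hm)
  show γ (n * t + k.val) (fun i => (burstOut (expandEnc n hn f) B j s' (i.val / n)).map
      (fun g => g ⟨i.val % n, Nat.mod_lt _ hn⟩)) = s' t k
  rw [← hflat, ← key]
  congr 1
  funext i
  unfold burstOut
  by_cases hc : j ≤ i.val / n ∧ i.val / n ≤ j + B - 1
  · rw [if_pos hc, if_pos ((cond_iff hn hB).mp hc)]; rfl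
  · rw [if_neg hc, if_neg (fun hc' => hc ((cond_iff hn hB).mpr hc'))]
    simp only [Option.map_some]
    rw [chanStream_expand hn, Nat.div_add_mod]

/-- Source pseudo-expansion / symbol grouping: if some streaming code with alphabets `S, X`
corrects bursts of length `n*B₁` with delay `D₁` and bursts of length `n*B₂` with delay `D₂`,
then some streaming code with alphabets `Sⁿ, Xⁿ` (the same rate) corrects bursts of length
`B₁` with delay `⌈D₁/n⌉` and bursts of length `B₂` with delay `⌈D₂/n⌉`. -/
theorem stmt_15 {S X : Type*} [Nonempty S] [Nonempty X] (n B₁ B₂ D₁ D₂ : ℕ)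
    (hn : 1 ≤ n) (hB₁ : 1 ≤ B₁) (hB₂ : 1 ≤ B₂) (hD₁ : 1 ≤ D₁) (hD₂ : 1 ≤ D₂)
    (h : ∃ f : ∀ t : ℕ, (Fin (t + 1) → S) → X,
      Corrects f (n * B₁) D₁ ∧ Corrects f (n * B₂) D₂) :
    ∃ f' : ∀ t : ℕ, (Fin (t + 1) → (Fin n → S)) → (Fin n → X),
      Corrects f' B₁ ⌈(D₁ : ℚ) / (n : ℚ)⌉₊ ∧ Corrects f' B₂ ⌈(D₂ : ℚ) / (n : ℚ)⌉₊ := by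
  obtain ⟨f, h1, h2⟩ := h
  have hn' : 0 < n := hn
  have hnq : (0 : ℚ) < (n : ℚ) := by exact_mod_cast hn'
  have hle : ∀ D : ℕ, D ≤ n * ⌈(D : ℚ) / (n : ℚ)⌉₊ := by
    intro D
    have h := Nat.le_ceil ((D : ℚ) / (n : ℚ))
    rw [div_le_iff₀ hnq] at h
    have h2 : (D : ℚ) ≤ ((n * ⌈(D : ℚ) / (n : ℚ)⌉₊ : ℕ) : ℚ) := by push_cast; linarith
    exact_mod_cast h2
  exact ⟨expandEnc n hn' f,
    expand_corrects hn' hB₁ (hle D₁) f h1,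
    expand_corrects hn' hB₂ (hle D₂) f h2⟩
end
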